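/- Let (C, R) be a finite strongly connected directed graph with positive edge labels κ and Laplacian A_κ ∈ ℝ^{m×m}. Then for every ϱ ≥ 0 there exists R_ϱ > 0 such that z^⊤ A_κ e^{z+w} < 0 for all w ∈ ℝ^m with |w| ≤ ϱ and all z ∈ ℝ^m with ∑ z_i = 0 and |z| ≥ R_ϱ. -/

import Mathlib

/-!
Let `i₀` maximise `z` and call an edge `(a, b)` steep if `z a - z b ≥ c · exp (z i₀ - z a)`.
If no edge is steep, then along every path out of `i₀` the depth `z i₀ - z ·` grows at most
like the iterates of `x ↦ x + c · exp x`; by strong connectivity every vertex is reached in a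
bounded number of steps, so `z` has bounded oscillation and, as `∑ i, z i = 0`, bounded norm.
Hence for `|z|` large there is a steep edge, and its term, of size `≳ c · exp (max z)`,
outweighs all the other terms, each of which is at most `exp ϱ · κ e · exp (max z)` because
`exp x · (y - x) ≤ exp y`.
-/

open Real Finset

theorem Relation.ReflTransGen.exists_le_iterate {α β : Type*} [Preorder β] {r : α → α → Prop}
    {i j : α} (h : Relation.ReflTransGen r i j) :
    ∃ n : ℕ, ∀ (f : α → β) (g : β → β), Monotone g → (∀ a b, r a b → f b ≤ g (f a)) →
      f j ≤ g^[n] (f i) := by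
  induction h with
  | refl => exact ⟨0, fun _ _ _ _ => le_rfl⟩
  | tail _ hbc ih =>
    obtain ⟨n, hn⟩ := ih
    refine ⟨n + 1, fun f g hg hstep => ?_⟩
    rw [Function.iterate_succ_apply']
    exact (hstep _ _ hbc).trans (hg (hn f g hg hstep))

theorem exists_forall_le_iterate_of_reflTransGen {α β : Type*} [Finite α] [Preorder β]
    {r : α → α → Prop} (hconn : ∀ i j, Relation.ReflTransGen r i j) :
    ∃ n : ℕ, ∀ (f : α → β) (g : β → β), Monotone g → id ≤ g →
      (∀ a b, r a b → f b ≤ g (f a)) → ∀ i j, f j ≤ g^[n] (f i) := by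
  choose len hlen using fun p : α × α => (hconn p.1 p.2).exists_le_iterate (β := β)
  obtain ⟨n, hn⟩ := Finite.exists_le len
  refine ⟨n, fun f g hg hid hstep i j => ?_⟩
  exact (hlen (i, j) f g hg hstep).trans (Function.monotone_iterate_of_id_le hid (hn (i, j)) _)

theorem Finset.exists_pos_forall_le {α : Type*} {s : Finset α} {f : α → ℝ}
    (h : ∀ a ∈ s, 0 < f a) : ∃ ε > 0, ∀ a ∈ s, ε ≤ f a := by
  rcases s.eq_empty_or_nonempty with rfl | hs
  · exact ⟨1, one_pos, by simp⟩
  · exact ⟨s.inf' hs f, (Finset.lt_inf'_iff hs).2 h, fun a ha => s.inf'_le f ha⟩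

theorem abs_le_of_sum_eq_zero_of_sub_le {ι : Type*} [Fintype ι] {z : ι → ℝ} {D : ℝ}
    (hz : ∑ i, z i = 0) (hD : ∀ i j, z i - z j ≤ D) (j : ι) : |z j| ≤ D := by
  have hne : (univ : Finset ι).Nonempty := ⟨j, mem_univ j⟩
  obtain ⟨i, -, hi⟩ := exists_le_of_sum_le (f := fun _ => (0 : ℝ)) (g := z) hne (by simp [hz])
  obtain ⟨k, -, hk⟩ := exists_le_of_sum_le (f := z) (g := fun _ => (0 : ℝ)) hne (by simp [hz])
  rw [abs_le]
  constructor <;> linarith [hD i j, hD j k]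

theorem EuclideanSpace.norm_le_sqrt_card_mul {ι : Type*} [Fintype ι] {x : EuclideanSpace ℝ ι}
    {D : ℝ} (hD : 0 ≤ D) (h : ∀ i, |x i| ≤ D) : ‖x‖ ≤ √(Fintype.card ι) * D := by
  rw [EuclideanSpace.norm_eq, ← sqrt_sq hD, ← sqrt_mul (Nat.cast_nonneg _)]
  gcongr
  calc ∑ i, ‖x i‖ ^ 2 ≤ ∑ _i : ι, D ^ 2 := by
        gcongr with i
        rw [norm_eq_abs]
        exact h i
    _ = Fintype.card ι * D ^ 2 := by simp

theorem Real.exp_mul_sub_le (x y : ℝ) : exp x * (y - x) ≤ exp y := by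
  calc exp x * (y - x) ≤ exp x * exp (y - x) := by
        gcongr
        linarith [add_one_le_exp (y - x)]
    _ = exp y := by rw [← exp_add, add_sub_cancel]

theorem exp_add_mul_mul_sub_le {x y w ϱ k : ℝ} (hw : w ≤ ϱ) (hk : 0 ≤ k) :
    exp (x + w) * k * (y - x) ≤ exp ϱ * k * exp y := by
  calc exp (x + w) * k * (y - x) = exp w * k * (exp x * (y - x)) := by rw [exp_add]; ring
    _ ≤ exp w * k * exp y := by gcongr; exact exp_mul_sub_le x y
    _ ≤ exp ϱ * k * exp y := by gcongr

theorem exp_add_mul_mul_sub_le_neg {x y w ϱ k c M : ℝ} (hw : -ϱ ≤ w) (hk : 0 ≤ k)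
    (hc : 0 ≤ c) (hsteep : c * exp (M - x) ≤ x - y) :
    exp (x + w) * k * (y - x) ≤ -(exp (-ϱ) * k * c * exp M) := by
  have hexp : exp (x - ϱ) * exp (M - x) = exp (-ϱ) * exp M := by
    rw [← exp_add, ← exp_add]; ring_nf
  have : exp (-ϱ) * k * c * exp M ≤ exp (x + w) * k * (x - y) :=
    calc exp (-ϱ) * k * c * exp M = exp (x - ϱ) * k * (c * exp (M - x)) := by
          rw [show exp (-ϱ) * k * c * exp M = k * c * (exp (-ϱ) * exp M) by ring, ← hexp]
          ring
      _ ≤ exp (x + w) * k * (x - y) := by gcongr; linarith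
  linarith

theorem sum_exp_mul_mul_sub_neg_of_steep_edge {ι : Type*} [DecidableEq ι] {R : Finset (ι × ι)}
    {κ : ι × ι → ℝ} {z w : ι → ℝ} {ϱ ε c M : ℝ} (hκ : ∀ e ∈ R, 0 ≤ κ e)
    (hε : ∀ e ∈ R, ε ≤ κ e) (hc0 : 0 ≤ c) (hc : (∑ e ∈ R, κ e) * exp (2 * ϱ) < ε * c)
    (hw : ∀ i, |w i| ≤ ϱ) (hzM : ∀ i, z i ≤ M) {e₀ : ι × ι} (he₀ : e₀ ∈ R)
    (hsteep : c * exp (M - z e₀.1) ≤ z e₀.1 - z e₀.2) :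
    ∑ e ∈ R, exp (z e.1 + w e.1) * κ e * (z e.2 - z e.1) < 0 := by
  rw [← add_sum_erase R _ he₀]
  have hsteep_term := exp_add_mul_mul_sub_le_neg (abs_le.1 (hw e₀.1)).1 (hκ e₀ he₀) hc0 hsteep
  have hrest : ∑ e ∈ R.erase e₀, exp (z e.1 + w e.1) * κ e * (z e.2 - z e.1)
      ≤ exp ϱ * (∑ e ∈ R, κ e) * exp M := by
    calc _ ≤ ∑ e ∈ R.erase e₀, exp ϱ * κ e * exp M := by
          refine sum_le_sum fun e he => ?_
          have heR := mem_of_mem_erase he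
          exact (exp_add_mul_mul_sub_le (abs_le.1 (hw e.1)).2 (hκ e heR)).trans
            (by have := hκ e heR; gcongr; exact hzM e.2)
      _ ≤ exp ϱ * (∑ e ∈ R, κ e) * exp M := by
          rw [← sum_mul, ← mul_sum]
          gcongr
          exacts [fun e he _ => hκ e he, erase_subset _ _]
  have hdom : exp ϱ * (∑ e ∈ R, κ e) * exp M < exp (-ϱ) * κ e₀ * c * exp M := by
    have hexp : exp ϱ = exp (2 * ϱ) * exp (-ϱ) := by rw [← exp_add]; ring_nf
    calc exp ϱ * (∑ e ∈ R, κ e) * exp M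
        = (∑ e ∈ R, κ e) * exp (2 * ϱ) * (exp (-ϱ) * exp M) := by rw [hexp]; ring
      _ < ε * c * (exp (-ϱ) * exp M) := by gcongr
      _ ≤ κ e₀ * c * (exp (-ϱ) * exp M) := by gcongr; exact hε e₀ he₀
      _ = exp (-ϱ) * κ e₀ * c * exp M := by ring
  linarith

theorem stmt_10_general (m : ℕ) (hm : 2 ≤ m) (R : Finset (Fin m × Fin m))
    (hconn : ∀ i j : Fin m, Relation.ReflTransGen (fun a b => (a, b) ∈ R) i j)
    (κ : Fin m × Fin m → ℝ) (hκ : ∀ e ∈ R, 0 < κ e) :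
    ∀ ϱ ≥ (0 : ℝ), ∃ Rϱ > (0 : ℝ), ∀ w : EuclideanSpace ℝ (Fin m), ‖w‖ ≤ ϱ →
      ∀ z : EuclideanSpace ℝ (Fin m), (∑ i, z i = 0) → Rϱ ≤ ‖z‖ →
        ∑ e ∈ R, Real.exp (z e.1 + w e.1) * κ e * (z e.2 - z e.1) < 0 := by
  intro ϱ _
  have : Nonempty (Fin m) := ⟨⟨0, by omega⟩⟩
  obtain ⟨ε, hε0, hε⟩ := exists_pos_forall_le hκ
  obtain ⟨n, hn⟩ := exists_forall_le_iterate_of_reflTransGen (β := ℝ) hconn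
  set c := ((∑ e ∈ R, κ e) * exp (2 * ϱ) + 1) / ε
  have hc0 : 0 ≤ c := div_nonneg (by positivity [sum_nonneg fun e he => (hκ e he).le]) hε0.le
  set g : ℝ → ℝ := fun x => x + c * exp x
  have hg : Monotone g := monotone_id.add (exp_monotone.const_mul hc0)
  have hg_id : id ≤ g := fun x => le_add_of_nonneg_right (by positivity)
  set D := g^[n] 0
  have hD : 0 ≤ D := Function.id_le_iterate_of_id_le hg_id n 0
  refine ⟨√m * D + 1, by positivity, fun w hw z hz hzR => ?_⟩
  obtain ⟨i₀, hi₀⟩ := Finite.exists_max fun i => z i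
  obtain ⟨e₀, he₀, hsteep⟩ : ∃ e ∈ R, c * exp (z i₀ - z e.1) ≤ z e.1 - z e.2 := by
    by_contra! hflat
    have hdepth := hn (fun j => z i₀ - z j) g hg hg_id
      (fun a b hab => by linarith [hflat (a, b) hab]) i₀
    simp only [sub_self] at hdepth
    have hnorm := EuclideanSpace.norm_le_sqrt_card_mul hD
      (abs_le_of_sum_eq_zero_of_sub_le hz fun i j => by linarith [hi₀ i, hdepth j])
    simp only [Fintype.card_fin] at hnorm
    linarith
  refine sum_exp_mul_mul_sub_neg_of_steep_edge (fun e he => (hκ e he).le) hε hc0 ?_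
    (fun i => (by simpa using PiLp.norm_apply_le w i : |w i| ≤ ‖w‖).trans hw) hi₀ he₀ hsteep
  rw [mul_div_cancel₀ _ hε0.ne']
  linarith

/-- Let `(C, R)` be a finite strongly connected digraph on `m ≥ 2` vertices without
self-loops, with positive edge labels `κ`. Then for every `ϱ ≥ 0` there is `R_ϱ > 0`
such that `z^⊤ A_κ e^{z+w} = ∑_{(i,j)∈R} e^{z_i + w_i} κ_{ij} (z_j − z_i) < 0` for all
`w` with `|w| ≤ ϱ` and all `z` with `∑ i, z i = 0` and `|z| ≥ R_ϱ`. -/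
theorem stmt_10 (m : ℕ) (hm : 2 ≤ m) (R : Finset (Fin m × Fin m))
    (hloop : ∀ e ∈ R, e.1 ≠ e.2)
    (hconn : ∀ i j : Fin m, Relation.ReflTransGen (fun a b => (a, b) ∈ R) i j)
    (κ : Fin m × Fin m → ℝ) (hκ : ∀ e ∈ R, 0 < κ e) :
    ∀ ϱ ≥ (0 : ℝ), ∃ Rϱ > (0 : ℝ), ∀ w : EuclideanSpace ℝ (Fin m), ‖w‖ ≤ ϱ →
      ∀ z : EuclideanSpace ℝ (Fin m), (∑ i, z i = 0) → Rϱ ≤ ‖z‖ →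
        ∑ e ∈ R, Real.exp (z e.1 + w e.1) * κ e * (z e.2 - z e.1) < 0 :=
  stmt_10_general m hm R hconn κ hκ
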